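/- Let a > b > 0 and c, δ > 0. For each n, let Ẑ_1^n, …, Ẑ_n^n be independent with √n·Ẑ_j^n ∼ Geometric on ℕ_0 with success probability 1 − ρ_j^{(n)} (ρ_j^{(n)} as in the Jackson stationary distribution with parameters a,b), and set X̂_i^n = Σ_{j=1}^i Ẑ_j^n. Then limsup_{N→∞} limsup_{n→∞} P( Σ_{i=N}^n exp(−c·X̂_i^n) > δ ) = 0. -/

import Mathlib

/-!
By Markov's inequality it suffices to bound `E[Σ_{i=N}^n exp(-c X̂_i^n)]`. The joint tail of the
gaps factorizes, so the gaps are independent, and dropping the first gap,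
`E[exp(-c X̂_i^n)] ≤ ∏_{j=2}^i E[exp(-c Ẑ_j^n)]`. For a geometric gap
`E[exp(-c Ẑ_j^n)] = (1 - ρ_j) / (1 - e^{-c/√n} ρ_j)`, which is nonincreasing in `ρ_j`; as
`ρ_j ≥ 1 - a/√n` for `j ≥ 2`, it is at most `a / (1 - e^{-c/√n} (1 - a/√n)) → a / (a + c)`, hence
at most `q = a / (a + c/2) < 1` for large `n`. The expectation is then at most
`q^{N-1} / (1 - q)` uniformly in large `n`, which tends to `0` as `N → ∞`.
-/

open Filter Finset MeasureTheory
open scoped ENNReal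

/-- Traffic intensities of the Jackson network representing the gaps of the
`n`-server marginal-JSQ system with pauses. -/
noncomputable def jacksonRho (a b : ℝ) (n i : ℕ) : ℝ :=
  if i = 1 then
    (1 - a / (n : ℝ) ^ ((3 : ℝ) / 2) + b / Real.sqrt n)
      * (1 - a / (n : ℝ) ^ ((3 : ℝ) / 2)) ^ (n - 1)
  else (1 - a / (n : ℝ) ^ ((3 : ℝ) / 2)) ^ (n - i + 1)

open ProbabilityTheory Real
open scoped Topology

theorem ENNReal.sum_Icc_pow_sub_one_le (r : ℝ≥0∞) {N : ℕ} (hN : 1 ≤ N) (n : ℕ) :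
    ∑ i ∈ Icc N n, r ^ (i - 1) ≤ r ^ (N - 1) * (1 - r)⁻¹ := by
  calc ∑ i ∈ Icc N n, r ^ (i - 1) = ∑ k ∈ range (n + 1 - N), r ^ (N - 1) * r ^ k := by
        rw [← Finset.Ico_add_one_right_eq_Icc, Finset.sum_Ico_eq_sum_range]
        refine Finset.sum_congr rfl fun k _ => ?_
        rw [← pow_add]
        congr 1
        omega
    _ ≤ r ^ (N - 1) * ∑' k, r ^ k := by
        rw [← Finset.mul_sum]
        gcongr
        exact ENNReal.sum_le_tsum _
    _ = r ^ (N - 1) * (1 - r)⁻¹ := by rw [ENNReal.tsum_geometric]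

theorem one_sub_div_one_sub_mul_le_of_le {x ρ ρ' : ℝ} (hx : x ≤ 1) (hρ : ρ ≤ ρ')
    (h : 0 < 1 - x * ρ) (h' : 0 < 1 - x * ρ') :
    (1 - ρ') / (1 - x * ρ') ≤ (1 - ρ) / (1 - x * ρ) := by
  rw [div_le_div_iff₀ h' h]
  nlinarith

theorem div_one_sub_exp_mul_le {a c s : ℝ} (ha : 0 < a) (hc : 0 < c) (hs : 2 * (a + c) ≤ s) :
    (a / s) / (1 - exp (-(c / s)) * (1 - a / s)) ≤ a / (a + c / 2) := by
  have hs0 : 0 < s := by linarith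
  set t := c / s with ht
  have hts : t * s = c := div_mul_cancel₀ c hs0.ne'
  have hexp_ge : 1 - t ≤ exp (-t) := by linarith [add_one_le_exp (-t)]
  have hexp_le : exp (-t) * (1 + t) ≤ 1 := by
    calc exp (-t) * (1 + t) ≤ exp (-t) * exp t := by gcongr; linarith [add_one_le_exp t]
      _ = 1 := by rw [← exp_add, neg_add_cancel, exp_zero]
  -- The denominator is at least `(1 - t) (a + c) / s`, and `t (a + c) ≤ c / 2`.
  have hden : (a + c / 2) / s ≤ 1 - exp (-t) * (1 - a / s) := by
    have hgap : (1 - t) * c ≤ s * (1 - exp (-t)) := by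
      rw [← hts]
      nlinarith [exp_pos (-t)]
    have hdrift : (1 - t) * a ≤ exp (-t) * a := by nlinarith
    have ht_small : t * (a + c) ≤ c / 2 := by
      rw [ht, div_mul_eq_mul_div, div_le_iff₀ hs0]
      nlinarith
    have hexpand : (1 - exp (-t) * (1 - a / s)) * s = s * (1 - exp (-t)) + exp (-t) * a := by
      field_simp
      ring
    rw [div_le_iff₀ hs0, hexpand]
    nlinarith
  calc (a / s) / (1 - exp (-t) * (1 - a / s)) ≤ (a / s) / ((a + c / 2) / s) := by gcongr
    _ = a / (a + c / 2) := by field_simp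

theorem jacksonRho_bounds {a : ℝ} (b : ℝ) (ha : 0 ≤ a) {n j : ℕ} (hj : j ∈ Icc 2 n)
    (han : a ≤ n) :
    0 ≤ jacksonRho a b n j ∧ jacksonRho a b n j ≤ 1 ∧ 1 - a / √n ≤ jacksonRho a b n j := by
  obtain ⟨hj2, hjn⟩ := Finset.mem_Icc.1 hj
  have hn : (1 : ℝ) ≤ n := by exact_mod_cast (by omega : 1 ≤ n)
  have hsqrt : 1 ≤ √n := one_le_sqrt.2 hn
  have hpow : (n : ℝ) ^ ((3 : ℝ) / 2) = n * √n := by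
    rw [show (3 : ℝ) / 2 = 1 + 1 / 2 by norm_num, rpow_add (by positivity), rpow_one,
      ← sqrt_eq_rpow]
  set y := a / (n * √n) with hy
  have hy0 : 0 ≤ y := by positivity
  have hy1 : y ≤ 1 := by
    rw [div_le_one (by positivity)]
    nlinarith
  have hny : n * y = a / √n := by rw [hy]; field_simp
  have hk : ((n - j + 1 : ℕ) : ℝ) ≤ n := by exact_mod_cast (by omega : n - j + 1 ≤ n)
  have hbernoulli := one_add_mul_le_pow (a := -y) (by linarith) (n - j + 1)
  rw [← sub_eq_add_neg] at hbernoulli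
  rw [jacksonRho, if_neg (by omega), hpow]
  refine ⟨by positivity, pow_le_one₀ (by linarith) (by linarith), ?_⟩
  nlinarith

theorem eventually_jacksonRho_ratio_le {a c : ℝ} (b : ℝ) (ha : 0 < a) (hc : 0 < c) :
    ∀ᶠ n : ℕ in atTop, ∀ j ∈ Icc 2 n, 0 ≤ jacksonRho a b n j ∧ jacksonRho a b n j ≤ 1 ∧
      (1 - jacksonRho a b n j) / (1 - exp (-(c / √n)) * jacksonRho a b n j)
        ≤ a / (a + c / 2) := by
  filter_upwards [tendsto_natCast_atTop_atTop.eventually_ge_atTop a,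
    (tendsto_sqrt_atTop.comp tendsto_natCast_atTop_atTop).eventually_ge_atTop (2 * (a + c))]
    with n han hs j hj
  rw [Function.comp_apply] at hs
  have hs0 : 0 < √n := by linarith
  obtain ⟨h0, h1, hlow⟩ := jacksonRho_bounds b ha.le hj han
  have hx0 : 0 < exp (-(c / √n)) := exp_pos _
  have hx1 : exp (-(c / √n)) < 1 := exp_lt_one_iff.2 (neg_lt_zero.2 (div_pos hc hs0))
  have hmin : 0 ≤ 1 - a / √n := by
    rw [sub_nonneg, div_le_one hs0]
    linarith
  refine ⟨h0, h1, (one_sub_div_one_sub_mul_le_of_le hx1.le hlow (by nlinarith)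
    (by nlinarith)).trans ?_⟩
  rw [sub_sub_cancel]
  exact div_one_sub_exp_mul_le ha hc hs

section GeometricTails

variable {Ω ι : Type*} [MeasurableSpace Ω] {μ : Measure Ω}

theorem iIndepFun_restrict_of_measure_forall_le_eq_prod [IsProbabilityMeasure μ]
    {K : ι → Ω → ℕ} (hK : ∀ i, Measurable (K i)) (t : Finset ι)
    (h : ∀ m : ι → ℕ, μ {ω | ∀ i ∈ t, m i ≤ K i ω} = ∏ i ∈ t, μ {ω | m i ≤ K i ω}) :
    iIndepFun (t.restrict K) μ := by
  classical
  rw [iIndepFun_iff_map_fun_eq_pi_map (f := t.restrict K) fun i => (hK i).aemeasurable]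
  refine (Measure.pi_eq_generateFrom (μ := fun i => μ.map (t.restrict K i))
    (fun _ => (borel_eq_generateFrom_Ici ℕ).symm.trans BorelSpace.measurable_eq.symm)
    (fun _ => isPiSystem_Ici)
    (fun _ => ⟨fun _ => Set.Ici 0, fun _ => ⟨0, rfl⟩, fun _ => measure_lt_top _ _,
      by simp [Set.iUnion_const]⟩)
    fun S hS => ?_).symm
  choose m hm using hS
  obtain rfl : S = fun i => Set.Ici (m i) := funext fun i => (hm i).symm
  have hbox : MeasurableSet (Set.univ.pi fun i => Set.Ici (m i)) :=
    .univ_pi fun _ => measurableSet_Ici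
  rw [Measure.map_apply (measurable_pi_lambda (fun ω i => t.restrict K i ω) fun i => hK i) hbox]
  simp only [Finset.restrict, Measure.map_apply (hK _) measurableSet_Ici]
  convert h fun i => if hi : i ∈ t then m ⟨i, hi⟩ else 0 using 1
  · congr 1
    ext ω
    simp only [Set.mem_preimage, Set.mem_univ_pi, Set.mem_Ici, Set.mem_ofPred_eq, Subtype.forall]
    exact forall₂_congr fun i hi => by rw [dif_pos hi]
  · rw [← Finset.prod_coe_sort t]
    exact Finset.prod_congr rfl fun i _ => by rw [dif_pos i.2]; rfl

theorem measure_preimage_singleton_eq_of_measure_le_eq_pow {K : Ω → ℕ} (hK : Measurable K)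
    [IsFiniteMeasure μ] {ρ : ℝ} (hρ0 : 0 ≤ ρ)
    (htail : ∀ k, μ {ω | k ≤ K ω} = ENNReal.ofReal (ρ ^ k)) (k : ℕ) :
    μ (K ⁻¹' {k}) = ENNReal.ofReal (ρ ^ k * (1 - ρ)) := by
  have hdiff : K ⁻¹' {k} = {ω | k ≤ K ω} \ {ω | k + 1 ≤ K ω} := by
    ext ω
    simp only [Set.mem_preimage, Set.mem_singleton_iff, Set.mem_sdiff, Set.mem_ofPred_eq]
    omega
  have hsucc : {ω | k + 1 ≤ K ω} ⊆ {ω | k ≤ K ω} := fun ω h => k.le_succ.trans h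
  rw [hdiff, measure_sdiff hsucc (measurableSet_le measurable_const hK).nullMeasurableSet
    (measure_ne_top _ _), htail, htail, ← ENNReal.ofReal_sub _ (by positivity)]
  ring_nf

theorem lintegral_pow_eq_of_measure_le_eq_pow {K : Ω → ℕ} (hK : Measurable K)
    [IsFiniteMeasure μ] {ρ x : ℝ} (hρ0 : 0 ≤ ρ) (hρ1 : ρ ≤ 1) (hx0 : 0 ≤ x) (hx1 : x < 1)
    (htail : ∀ k, μ {ω | k ≤ K ω} = ENNReal.ofReal (ρ ^ k)) :
    ∫⁻ ω, ENNReal.ofReal x ^ K ω ∂μ = ENNReal.ofReal ((1 - ρ) / (1 - x * ρ)) := by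
  have hxρ : x * ρ < 1 := by nlinarith
  calc ∫⁻ ω, ENNReal.ofReal x ^ K ω ∂μ
      = ∑' k : ℕ, ENNReal.ofReal x ^ k * μ (K ⁻¹' {k}) := by
        rw [← lintegral_map (f := fun k => ENNReal.ofReal x ^ k) (by fun_prop) hK,
          lintegral_countable']
        simp only [Measure.map_apply hK (measurableSet_singleton _)]
    _ = ∑' k : ℕ, ENNReal.ofReal (x * ρ) ^ k * ENNReal.ofReal (1 - ρ) := by
        congr 1 with k
        rw [measure_preimage_singleton_eq_of_measure_le_eq_pow hK hρ0 htail,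
          ← ENNReal.ofReal_pow hx0, ← ENNReal.ofReal_pow (by positivity),
          ← ENNReal.ofReal_mul (by positivity), ← ENNReal.ofReal_mul (by positivity), mul_pow,
          mul_assoc]
    _ = ENNReal.ofReal ((1 - ρ) / (1 - x * ρ)) := by
        rw [ENNReal.tsum_mul_right, ENNReal.tsum_geometric, div_eq_mul_inv, mul_comm,
          ENNReal.ofReal_mul (p := 1 - ρ) (by linarith), ENNReal.ofReal_inv_of_pos (by linarith),
          ENNReal.ofReal_sub 1 (q := x * ρ) (by positivity), ENNReal.ofReal_one]

variable {K : ι → Ω → ℕ} {s : Finset ι} {ρ : ι → ℝ}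

theorem measure_forall_le_eq_prod_of_subset
    (htail : ∀ m : ι → ℕ, μ {ω | ∀ i ∈ s, m i ≤ K i ω} = ∏ i ∈ s, ENNReal.ofReal (ρ i ^ m i))
    {t : Finset ι} (hts : t ⊆ s) (m : ι → ℕ) :
    μ {ω | ∀ i ∈ t, m i ≤ K i ω} = ∏ i ∈ t, ENNReal.ofReal (ρ i ^ m i) := by
  classical
  have h := htail fun i => if i ∈ t then m i else 0
  rw [← Finset.prod_subset hts fun i _ hi => by simp [hi]] at h
  convert h using 1
  · congr 1
    ext ω
    refine ⟨fun hω i _ => ?_, fun hω i hi => ?_⟩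
    · split_ifs with hi
      · exact hω i hi
      · exact Nat.zero_le _
    · simpa [hi] using hω i (hts hi)
  · exact Finset.prod_congr rfl fun i hi => by simp [hi]

theorem lintegral_prod_pow_eq_prod [IsProbabilityMeasure μ]
    (htail : ∀ m : ι → ℕ, μ {ω | ∀ i ∈ s, m i ≤ K i ω} = ∏ i ∈ s, ENNReal.ofReal (ρ i ^ m i))
    (hK : ∀ i, Measurable (K i))
    {t : Finset ι} (hts : t ⊆ s) (hρ : ∀ i ∈ t, 0 ≤ ρ i ∧ ρ i ≤ 1) {x : ℝ} (hx0 : 0 ≤ x)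
    (hx1 : x < 1) :
    ∫⁻ ω, ∏ i ∈ t, ENNReal.ofReal x ^ K i ω ∂μ =
      ∏ i ∈ t, ENNReal.ofReal ((1 - ρ i) / (1 - x * ρ i)) := by
  have hsingle : ∀ i ∈ t, ∀ k, μ {ω | k ≤ K i ω} = ENNReal.ofReal (ρ i ^ k) := fun i hi k => by
    simpa using measure_forall_le_eq_prod_of_subset htail
      (Finset.singleton_subset_iff.2 (hts hi)) fun _ => k
  have hindep : iIndepFun (t.restrict K) μ :=
    iIndepFun_restrict_of_measure_forall_le_eq_prod hK t fun m => by
      rw [measure_forall_le_eq_prod_of_subset htail hts m]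
      exact Finset.prod_congr rfl fun i hi => (hsingle i hi (m i)).symm
  have hprod := lintegral_prod_eq_prod_lintegral_of_indepFun Finset.univ _
    (hindep.comp (fun _ k => ENNReal.ofReal x ^ k) fun _ => measurable_from_nat)
    fun i => measurable_from_nat.comp (hK i)
  simp only [Function.comp_apply, Finset.restrict] at hprod
  simp only [← Finset.prod_coe_sort t, hprod]
  exact Fintype.prod_congr _ _ fun i => lintegral_pow_eq_of_measure_le_eq_pow (hK i)
    (hρ i i.2).1 (hρ i i.2).2 hx0 hx1 (hsingle i i.2)

theorem measure_lt_sum_le_of_lintegral_le_pow {f : ℕ → Ω → ℝ} (hf : ∀ i, Measurable (f i))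
    (hf0 : ∀ i ω, 0 ≤ f i ω) {δ : ℝ} (hδ : 0 < δ) {r : ℝ≥0∞} {N n : ℕ} (hN : 1 ≤ N)
    (h : ∀ i ∈ Icc N n, ∫⁻ ω, ENNReal.ofReal (f i ω) ∂μ ≤ r ^ (i - 1)) :
    μ {ω | δ < ∑ i ∈ Icc N n, f i ω} ≤ r ^ (N - 1) * (1 - r)⁻¹ / ENNReal.ofReal δ := by
  calc μ {ω | δ < ∑ i ∈ Icc N n, f i ω}
      ≤ μ {ω | ENNReal.ofReal δ ≤ ∑ i ∈ Icc N n, ENNReal.ofReal (f i ω)} := by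
        refine measure_mono fun ω hω => ?_
        rw [Set.mem_ofPred_eq, ← ENNReal.ofReal_sum_of_nonneg fun i _ => hf0 i ω]
        exact ENNReal.ofReal_le_ofReal (le_of_lt hω)
    _ ≤ (∫⁻ ω, ∑ i ∈ Icc N n, ENNReal.ofReal (f i ω) ∂μ) / ENNReal.ofReal δ :=
        meas_ge_le_lintegral_div (by fun_prop) (ENNReal.ofReal_pos.2 hδ).ne'
          ENNReal.ofReal_ne_top
    _ ≤ (∑ i ∈ Icc N n, r ^ (i - 1)) / ENNReal.ofReal δ := by
        rw [lintegral_finsetSum _ fun i _ => (hf i).ennreal_ofReal]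
        gcongr with i hi
        exact h i hi
    _ ≤ r ^ (N - 1) * (1 - r)⁻¹ / ENNReal.ofReal δ := by
        gcongr
        exact ENNReal.sum_Icc_pow_sub_one_le r hN n

theorem measure_lt_sum_exp_neg_le [IsProbabilityMeasure μ] {Z : ℕ → Ω → ℝ} {ρ : ℕ → ℝ} {n : ℕ}
    (hn : 0 < n) (hZ : ∀ j, Measurable (Z j)) (hlat : ∀ j ω, ∃ m : ℕ, Z j ω = m / √n)
    (htail : ∀ m : ℕ → ℕ, μ {ω | ∀ j ∈ Icc 1 n, (m j : ℝ) / √n ≤ Z j ω}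
      = ∏ j ∈ Icc 1 n, ENNReal.ofReal (ρ j ^ m j))
    {c q δ : ℝ} (hc : 0 < c) (hδ : 0 < δ)
    (hρ : ∀ j ∈ Icc 2 n, 0 ≤ ρ j ∧ ρ j ≤ 1 ∧ (1 - ρ j) / (1 - exp (-(c / √n)) * ρ j) ≤ q)
    {N : ℕ} (hN : 1 ≤ N) :
    μ {ω | δ < ∑ i ∈ Icc N n, exp (-(c * ∑ j ∈ Icc 1 i, Z j ω))}
      ≤ ENNReal.ofReal q ^ (N - 1) * (1 - ENNReal.ofReal q)⁻¹ / ENNReal.ofReal δ := by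
  have hs : 0 < √n := sqrt_pos.2 (by exact_mod_cast hn)
  set K : ℕ → Ω → ℕ := fun j ω => ⌊√n * Z j ω⌋₊
  have hZK : ∀ j ω, Z j ω = K j ω / √n := fun j ω => by
    obtain ⟨m, hm⟩ := hlat j ω
    simp only [K, hm, mul_div_cancel₀ _ hs.ne', Nat.floor_natCast]
  have hK : ∀ j, Measurable (K j) := fun j => ((hZ j).const_mul _).nat_floor
  have htailK : ∀ m : ℕ → ℕ, μ {ω | ∀ j ∈ Icc 1 n, m j ≤ K j ω}
      = ∏ j ∈ Icc 1 n, ENNReal.ofReal (ρ j ^ m j) := fun m => by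
    simp_rw [← htail m, hZK, div_le_div_iff_of_pos_right hs, Nat.cast_le]
  refine measure_lt_sum_le_of_lintegral_le_pow (fun i => by fun_prop)
    (fun _ _ => (exp_pos _).le) hδ hN fun i hi => ?_
  have hIcc₁ : Icc 2 i ⊆ Icc 1 n := Icc_subset_Icc one_le_two (Finset.mem_Icc.1 hi).2
  have hIcc₂ : Icc 2 i ⊆ Icc 2 n := Icc_subset_Icc_right (Finset.mem_Icc.1 hi).2
  have hx0 : 0 ≤ exp (-(c / √n)) := (exp_pos _).le
  have hx1 : exp (-(c / √n)) < 1 := exp_lt_one_iff.2 (neg_lt_zero.2 (div_pos hc hs))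
  -- The first gap is dropped: nothing keeps `ρ 1` below `1`.
  have hdrop : ∀ ω, ENNReal.ofReal (exp (-(c * ∑ j ∈ Icc 1 i, Z j ω)))
      ≤ ∏ j ∈ Icc 2 i, ENNReal.ofReal (exp (-(c / √n))) ^ K j ω := fun ω => by
    have hZ0 : ∀ j, 0 ≤ Z j ω := fun j => by rw [hZK]; positivity
    have hsum : ∑ j ∈ Icc 2 i, Z j ω ≤ ∑ j ∈ Icc 1 i, Z j ω :=
      Finset.sum_le_sum_of_subset_of_nonneg (Icc_subset_Icc_left one_le_two) fun j _ _ => hZ0 j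
    have hexponent : ∑ j ∈ Icc 2 i, (K j ω : ℝ) * -(c / √n) = -(c * ∑ j ∈ Icc 2 i, Z j ω) := by
      simp_rw [hZK, Finset.mul_sum, ← Finset.sum_neg_distrib]
      exact Finset.sum_congr rfl fun j _ => by ring
    simp_rw [← ENNReal.ofReal_pow hx0]
    rw [← ENNReal.ofReal_prod_of_nonneg fun j _ => by positivity]
    refine ENNReal.ofReal_le_ofReal ?_
    simp_rw [← exp_nat_mul, ← exp_sum]
    rw [exp_le_exp, hexponent]
    nlinarith
  calc ∫⁻ ω, ENNReal.ofReal (exp (-(c * ∑ j ∈ Icc 1 i, Z j ω))) ∂μ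
      ≤ ∫⁻ ω, ∏ j ∈ Icc 2 i, ENNReal.ofReal (exp (-(c / √n))) ^ K j ω ∂μ :=
        lintegral_mono hdrop
    _ = ∏ j ∈ Icc 2 i, ENNReal.ofReal ((1 - ρ j) / (1 - exp (-(c / √n)) * ρ j)) :=
        lintegral_prod_pow_eq_prod htailK hK hIcc₁
          (fun j hj => ⟨(hρ j (hIcc₂ hj)).1, (hρ j (hIcc₂ hj)).2.1⟩) hx0 hx1
    _ ≤ ∏ j ∈ Icc 2 i, ENNReal.ofReal q :=
        Finset.prod_le_prod' fun j hj => ENNReal.ofReal_le_ofReal (hρ j (hIcc₂ hj)).2.2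
    _ = ENNReal.ofReal q ^ (i - 1) := by
        rw [Finset.prod_const, Nat.card_Icc, Nat.add_sub_add_right i 1 1]

end GeometricTails

/-- Tightness of exponential moments of the stationary positions: with
`Ẑ_j^n` independent scaled geometric gaps and `X̂_i^n = Σ_{j=1}^i Ẑ_j^n`,
`limsup_N limsup_n P(Σ_{i=N}^n e^{−c X̂_i^n} > δ) = 0`. -/
theorem stationary_initial_condition_tightness
    (a b : ℝ) (hb : 0 < b) (hab : b < a) (c δ : ℝ) (hc : 0 < c) (hδ : 0 < δ)
    {Ω : Type*} [MeasurableSpace Ω] (μ : Measure Ω) [IsProbabilityMeasure μ]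
    (Zhat : ℕ → ℕ → Ω → ℝ)
    (hmeas : ∀ n j, Measurable (Zhat n j))
    (hlattice : ∀ n j ω, ∃ m : ℕ, Zhat n j ω = (m : ℝ) / Real.sqrt n)
    -- `√n Ẑ_1^n, …, √n Ẑ_n^n` are independent geometric random variables on
    -- `ℕ₀` with success probabilities `1 − ρ_j^{(n)}`:
    (htail : ∀ n, 1 ≤ n → ∀ m : ℕ → ℕ,
      μ {ω | ∀ j ∈ Icc 1 n, (m j : ℝ) / Real.sqrt n ≤ Zhat n j ω}
        = ∏ j ∈ Icc 1 n, ENNReal.ofReal (jacksonRho a b n j ^ m j)) :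
    limsup (fun N : ℕ =>
      limsup (fun n : ℕ =>
        μ {ω | δ < ∑ i ∈ Icc N n,
            Real.exp (-(c * ∑ j ∈ Icc 1 i, Zhat n j ω))}) atTop) atTop = 0 := by
  have ha : 0 < a := hb.trans hab
  set r := ENNReal.ofReal (a / (a + c / 2))
  have hr : r < 1 := ENNReal.ofReal_lt_one.2 ((div_lt_one (by positivity)).2 (by linarith))
  set C := (1 - r)⁻¹ / ENNReal.ofReal δ
  have hC : C ≠ ⊤ :=
    ENNReal.div_ne_top (ENNReal.inv_ne_top.2 (tsub_pos_of_lt hr).ne') (ENNReal.ofReal_pos.2 hδ).ne'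
  have hlim : Tendsto (fun N : ℕ => r ^ (N - 1) * C) atTop (𝓝 0) := by
    simpa using ENNReal.Tendsto.mul_const ((ENNReal.tendsto_pow_atTop_nhds_zero_iff.2 hr).comp
      (tendsto_sub_atTop_nat 1)) (Or.inr hC)
  refine le_antisymm ((limsup_le_limsup ?_).trans_eq hlim.limsup_eq) bot_le
  filter_upwards [eventually_ge_atTop 1] with N hN
  refine limsup_le_of_le (by isBoundedDefault) ?_
  filter_upwards [eventually_gt_atTop 0, eventually_jacksonRho_ratio_le b ha hc] with n hn hρ
  exact (measure_lt_sum_exp_neg_le hn (hmeas n) (hlattice n) (htail n hn) hc hδ hρ hN).trans_eq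
    (mul_div_assoc _ _ _)
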